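/- arXiv:2207.03976 — 2 statements merged into one kernel-verified Lean document; each statement's English description precedes it below -/
import Mathlib

section
/- Substituting the stationarity conditions w = ΦYα and c = (1/λ)YΔᵀYα into the HGMM Lagrangian, the dual objective equals −(1/2)αᵀY(ΦᵀΦ + (1/λ)ΔΔᵀ)Yα + eᵀα for α satisfying eᵀYα = 0; hence the dual problem is minimizing (1/2)αᵀY(K + (1/λ)ΔΔᵀ)Yα − eᵀα over α ≥ 0 with eᵀYα = 0, where K = ΦᵀΦ. -/
open Matrix

/-- Substituting the stationarity conditions into the HGMM Lagrangian yields the dual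
objective eᵀα − (1/2)αᵀY(ΦᵀΦ + (1/λ)ΔΔᵀ)Yα. -/
theorem hgmm_lagrangian_dual_objective (m d : ℕ) (l : ℝ) (hl : 0 < l)
    (y : Fin m → ℝ) (hy : ∀ i, y i = 1 ∨ y i = -1)
    (Φ : Matrix (Fin d) (Fin m) ℝ) (Δ : Matrix (Fin m) (Fin m) ℝ)
    (b : ℝ) (α : Fin m → ℝ)
    (w : Fin d → ℝ) (hw : w = Φ *ᵥ (Matrix.diagonal y *ᵥ α))
    (c : Fin m → ℝ)
    (hc : c = (1 / l) • (Matrix.diagonal y *ᵥ (Δᵀ *ᵥ (Matrix.diagonal y *ᵥ α))))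
    (heq : (fun _ => (1 : ℝ)) ⬝ᵥ (Matrix.diagonal y *ᵥ α) = 0) :
    (1 / 2) * (w ⬝ᵥ w) + (l / 2) * (c ⬝ᵥ c)
      - α ⬝ᵥ ((Matrix.diagonal y *ᵥ
          (Φᵀ *ᵥ w + (fun _ => b) + Δ *ᵥ (Matrix.diagonal y *ᵥ c))) - fun _ => 1)
    = (fun _ => (1 : ℝ)) ⬝ᵥ α
      - (1 / 2) * (α ⬝ᵥ ((Matrix.diagonal y * (Φᵀ * Φ + (1 / l) • (Δ * Δᵀ))
          * Matrix.diagonal y) *ᵥ α)) := by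
  set D := Matrix.diagonal y with hDdef
  set β := D *ᵥ α with hβ
  have hD2 : D * D = 1 := by
    rw [hDdef, diagonal_mul_diagonal]
    have : (fun i => y i * y i) = fun _ => (1 : ℝ) := by
      funext i; rcases hy i with h | h <;> rw [h] <;> ring
    rw [this]; exact diagonal_one
  have hDsymm : Dᵀ = D := by rw [hDdef, diagonal_transpose]
  -- α ⬝ᵥ (D *ᵥ x) = β ⬝ᵥ x
  have hpull : ∀ x : Fin m → ℝ, α ⬝ᵥ (D *ᵥ x) = β ⬝ᵥ x := by
    intro x
    rw [dotProduct_mulVec, hβ, ← mulVec_transpose, hDsymm]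
  have hl0 : l ≠ 0 := ne_of_gt hl
  have hDnorm : ∀ z v : Fin m → ℝ, (D *ᵥ z) ⬝ᵥ (D *ᵥ v) = z ⬝ᵥ v := by
    intro z v
    rw [dotProduct_mulVec, ← mulVec_transpose, hDsymm, mulVec_mulVec, hD2, one_mulVec]
  have h1 : w ⬝ᵥ w = β ⬝ᵥ ((Φᵀ * Φ) *ᵥ β) := by
    rw [hw]
    conv_rhs => rw [← mulVec_mulVec, dotProduct_mulVec, ← mulVec_transpose,
      transpose_transpose]
  have h2 : c ⬝ᵥ c = (1 / l) ^ 2 * (β ⬝ᵥ ((Δ * Δᵀ) *ᵥ β)) := by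
    rw [hc, smul_dotProduct, dotProduct_smul, smul_eq_mul, smul_eq_mul, ← mul_assoc, ← sq]
    congr 1
    rw [hDnorm]
    conv_rhs => rw [← mulVec_mulVec, dotProduct_mulVec, ← mulVec_transpose]
  have h3 : β ⬝ᵥ (Φᵀ *ᵥ w) = β ⬝ᵥ ((Φᵀ * Φ) *ᵥ β) := by
    rw [hw, mulVec_mulVec]
  have hDDmul : ∀ x, D *ᵥ (D *ᵥ x) = x := by
    intro x; rw [mulVec_mulVec, hD2, one_mulVec]
  have h4 : β ⬝ᵥ (Δ *ᵥ (D *ᵥ c)) = (1 / l) * (β ⬝ᵥ ((Δ * Δᵀ) *ᵥ β)) := by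
    rw [hc, mulVec_smul, mulVec_smul, dotProduct_smul, smul_eq_mul]
    congr 1
    rw [hDDmul, mulVec_mulVec]
  have h5 : β ⬝ᵥ (fun _ => b) = 0 := by
    have : β ⬝ᵥ (fun _ => b) = b * ((fun _ => (1:ℝ)) ⬝ᵥ β) := by
      simp [dotProduct, Finset.mul_sum, mul_comm]
    rw [this, heq, mul_zero]
  have h6 : α ⬝ᵥ ((D * (Φᵀ * Φ + (1 / l) • (Δ * Δᵀ)) * D) *ᵥ α)
      = β ⬝ᵥ ((Φᵀ * Φ) *ᵥ β) + (1 / l) * (β ⬝ᵥ ((Δ * Δᵀ) *ᵥ β)) := by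
    rw [← mulVec_mulVec, ← mulVec_mulVec, hpull, add_mulVec, smul_mulVec,
      dotProduct_add, dotProduct_smul, smul_eq_mul]
  rw [dotProduct_sub, hpull, dotProduct_add, dotProduct_add, h1, h2, h3, h4, h5, h6]
  have h7 : (α ⬝ᵥ fun _ => (1:ℝ)) = (fun _ => (1:ℝ)) ⬝ᵥ α := dotProduct_comm _ _
  rw [h7]
  field_simp
  ring
end

section
/- Substituting c = (1/λ)YΔᵀYα into the GMM decision g(x) = Σᵢ y_i α_i K(x_i, x) + b + Σᵢ y_i c_i δ(x_i, x) yields g(x) = Σᵢ y_i α_i (K(x_i, x) + (1/λ)(δ(x, X)Δᵀ)_i) + b; in particular, if K₂(x, X) := δ(x, X)Δᵀ and τ = 1/λ, this equals the SVM^m decision Σᵢ y_i α_i (K₁(x_i,x) + τK₂(x_i,x)) + b. -/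
open Matrix

/-- Substituting c = (1/λ)YΔᵀYα into the GMM decision yields the SVM^m decision form:
g(x) = Σᵢ yᵢαᵢ(K₁(xᵢ,x) + τK₂(xᵢ,x)) + b with K₂(xᵢ,x) = (δ(x,X)Δᵀ)ᵢ and τ = 1/λ. -/
theorem sgmm_decision_eq_svmm_decision (m : ℕ) (l : ℝ) (hl : 0 < l)
    (y : Fin m → ℝ) (hy : ∀ i, y i = 1 ∨ y i = -1)
    (Δ : Matrix (Fin m) (Fin m) ℝ) (α : Fin m → ℝ) (b : ℝ)
    (Kv δv : Fin m → ℝ)  -- Kv i = K(x_i, x), δv i = δ(x_i, x) at an arbitrary point x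
    (c : Fin m → ℝ)
    (hc : c = (1 / l) • (Matrix.diagonal y *ᵥ (Δᵀ *ᵥ (Matrix.diagonal y *ᵥ α)))) :
    ((∑ i, y i * α i * Kv i) + b + ∑ i, y i * c i * δv i
      = (∑ i, y i * α i * (Kv i + (1 / l) * ∑ j, δv j * Δ i j)) + b) ∧
    (∀ τ : ℝ, τ = 1 / l →
      (∑ i, y i * α i * Kv i) + b + ∑ i, y i * c i * δv i
        = (∑ i, y i * α i * (Kv i + τ * ∑ j, δv j * Δ i j)) + b) := by
  have key : (∑ i, y i * α i * Kv i) + b + ∑ i, y i * c i * δv i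
      = (∑ i, y i * α i * (Kv i + (1 / l) * ∑ j, δv j * Δ i j)) + b := by
    have hsq : ∀ i, y i * y i = 1 := by
      intro i; rcases hy i with h | h <;> simp [h]
    have hci : ∀ i, c i = (1 / l) * (y i * ∑ k, Δ k i * (y k * α k)) := by
      intro i
      simp only [hc, Pi.smul_apply, smul_eq_mul, mulVec, dotProduct, transpose_apply,
        diagonal_apply, ite_mul, zero_mul, Finset.sum_ite_eq, Finset.mem_univ, if_true]
    have hterm : ∑ i, y i * c i * δv i
        = ∑ i, y i * α i * ((1 / l) * ∑ j, δv j * Δ i j) := by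
      calc ∑ i, y i * c i * δv i
          = ∑ i, ∑ k, (1 / l) * (y k * α k) * (δv i * Δ k i) := by
            apply Finset.sum_congr rfl; intro i _
            rw [hci i]
            calc y i * (1 / l * (y i * ∑ k, Δ k i * (y k * α k))) * δv i
                = (y i * y i) * ((1 / l) * (∑ k, Δ k i * (y k * α k)) * δv i) := by ring
              _ = (1 / l) * (∑ k, Δ k i * (y k * α k)) * δv i := by rw [hsq i]; ring
              _ = ∑ k, 1 / l * (y k * α k) * (δv i * Δ k i) := by
                  rw [Finset.mul_sum, Finset.sum_mul]
                  exact Finset.sum_congr rfl fun k _ => by ring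
        _ = ∑ k, y k * α k * ((1 / l) * ∑ j, δv j * Δ k j) := by
            rw [Finset.sum_comm]
            apply Finset.sum_congr rfl; intro k _
            rw [Finset.mul_sum, Finset.mul_sum]
            apply Finset.sum_congr rfl; intro i _; ring
    rw [hterm]
    have hre : ∀ A C : ℝ, A + b + C = A + C + b := fun A C => by ring
    rw [hre, ← Finset.sum_add_distrib]
    congr 1
    apply Finset.sum_congr rfl; intro i _; ring
  exact ⟨key, fun τ hτ => by rw [hτ]; exact key⟩
end
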